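/- arXiv:1905.00179 — 6 statements merged into one kernel-verified Lean document; each statement's English description precedes it below -/
import Mathlib

section
/- Let u ∈ H²([0,1]) attain its minimum u_min at a point x* ∈ [0,1]. Then for every x ∈ [0,1], u(x) − u_min ≤ (2/3) ‖u''‖_{L²([0,1])} |x − x*|^{3/2}. -/
/-!
Since `u'` vanishes at `x*`, the fundamental theorem of calculus and Cauchy–Schwarz give
`|u' t| ≤ ‖u''‖₂ |t - x*| ^ (1/2)`; integrating this bound between `x*` and `x` gives
`|u x - u x*| ≤ (2/3) ‖u''‖₂ |x - x*| ^ (3/2)`.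
-/

open MeasureTheory Set intervalIntegral
open scoped Interval

theorem integral_rpow_abs_sub_uIoc (a b : ℝ) {r : ℝ} (hr : -1 < r) :
    ∫ x in Ι a b, |x - a| ^ r = |b - a| ^ (r + 1) / (r + 1) := by
  rcases le_or_gt a b with hab | hab
  · calc
      ∫ x in Ι a b, |x - a| ^ r = ∫ x in a..b, |x - a| ^ r := by
        rw [uIoc_of_le hab, ← integral_of_le hab]
      _ = ∫ x in 0..(b - a), x ^ r := by
        simp only [integral_comp_sub_right fun x => |x| ^ r, sub_self]
        refine integral_congr fun x hx => congr_arg₂ HPow.hPow (abs_of_nonneg ?_) rfl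
        rw [uIcc_of_le (sub_nonneg.2 hab)] at hx
        exact hx.1
      _ = |b - a| ^ (r + 1) / (r + 1) := by
        rw [integral_rpow (Or.inl hr), abs_of_nonneg (sub_nonneg.2 hab),
          Real.zero_rpow (by linarith), sub_zero]
  · calc
      ∫ x in Ι a b, |x - a| ^ r = ∫ x in b..a, |x - a| ^ r := by
        rw [uIoc_of_ge hab.le, ← integral_of_le hab.le]
      _ = ∫ x in b - a..0, (-x) ^ r := by
        simp only [integral_comp_sub_right fun x => |x| ^ r, sub_self]
        refine integral_congr fun x hx => congr_arg₂ HPow.hPow (abs_of_nonpos ?_) rfl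
        rw [uIcc_of_le (sub_nonpos.2 hab.le)] at hx
        exact hx.2
      _ = |b - a| ^ (r + 1) / (r + 1) := by
        rw [integral_comp_neg fun x => x ^ r, integral_rpow (Or.inl hr),
          abs_of_neg (sub_neg.2 hab), neg_zero, Real.zero_rpow (by linarith), sub_zero, neg_sub]

theorem integral_abs_le_integral_sq_rpow_half_mul {α : Type*} [MeasurableSpace α]
    {μ : Measure α} [IsFiniteMeasure μ] {f : α → ℝ} (hf : MemLp f 2 μ) :
    ∫ x, |f x| ∂μ ≤ (∫ x, f x ^ 2 ∂μ) ^ (1 / 2 : ℝ) * μ.real univ ^ (1 / 2 : ℝ) := by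
  have h2 : ENNReal.ofReal 2 = 2 := by norm_num
  have := integral_mul_le_Lp_mul_Lq_of_nonneg Real.HolderConjugate.two_two
    (f := fun x => |f x|) (g := fun _ => (1 : ℝ)) (.of_forall fun _ => abs_nonneg _)
    (.of_forall fun _ => zero_le_one) (h2 ▸ hf.abs) (h2 ▸ memLp_const 1)
  simpa only [mul_one, one_pow, Real.rpow_two, sq_abs, Real.one_rpow,
    MeasureTheory.integral_const, smul_eq_mul] using this

theorem aestronglyMeasurable_of_hasDerivAt {v w : ℝ → ℝ} {s : Set ℝ} (hs : MeasurableSet s)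
    (hv : ∀ t ∈ s, HasDerivAt v (w t) t) : AEStronglyMeasurable w (volume.restrict s) :=
  (measurable_deriv v).aestronglyMeasurable.congr <|
    (ae_restrict_of_forall_mem hs fun t ht => (hv t ht).deriv)

theorem abs_sub_le_integral_sq_rpow_half_mul {v w : ℝ → ℝ} {a b x y : ℝ}
    (hv : ∀ t ∈ Icc a b, HasDerivAt v (w t) t) (hw : IntegrableOn (fun t => w t ^ 2) (Icc a b))
    (hx : x ∈ Icc a b) (hy : y ∈ Icc a b) :
    |v y - v x| ≤ (∫ t in Icc a b, w t ^ 2) ^ (1 / 2 : ℝ) * |y - x| ^ (1 / 2 : ℝ) := by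
  have hsub : Ι x y ⊆ Icc a b := uIoc_subset_uIcc.trans (uIcc_subset_Icc hx hy)
  have hL2 : MemLp w 2 (volume.restrict (Ι x y)) :=
    (memLp_two_iff_integrable_sq (aestronglyMeasurable_of_hasDerivAt measurableSet_uIoc
      fun t ht => hv t (hsub ht))).2 (hw.mono_set hsub)
  have : IsFiniteMeasure (volume.restrict (Ι x y)) :=
    isFiniteMeasure_restrict.2 (by simp [Real.volume_uIoc])
  have hftc : ∫ t in x..y, w t = v y - v x :=
    integral_eq_sub_of_hasDerivAt (fun t ht => hv t (uIcc_subset_Icc hx hy ht))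
      (intervalIntegrable_iff.2 (hL2.integrable one_le_two))
  calc |v y - v x| = ‖∫ t in x..y, w t‖ := by rw [hftc, Real.norm_eq_abs]
    _ ≤ ∫ t in Ι x y, |w t| := norm_integral_le_integral_norm_uIoc
    _ ≤ (∫ t in Ι x y, w t ^ 2) ^ (1 / 2 : ℝ) * |y - x| ^ (1 / 2 : ℝ) := by
      simpa [Measure.real, Real.volume_uIoc] using integral_abs_le_integral_sq_rpow_half_mul hL2
    _ ≤ (∫ t in Icc a b, w t ^ 2) ^ (1 / 2 : ℝ) * |y - x| ^ (1 / 2 : ℝ) := by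
      gcongr ?_ ^ _ * _
      exact setIntegral_mono_set hw (.of_forall fun _ => sq_nonneg _) hsub.eventuallyLE

theorem abs_sub_le_of_abs_deriv_le_rpow_abs_sub {v w : ℝ → ℝ} {a b C r : ℝ} (hr : 0 ≤ r)
    (hv : ∀ t ∈ uIcc a b, HasDerivAt v (w t) t) (hw : IntervalIntegrable w volume a b)
    (hbound : ∀ t ∈ uIcc a b, |w t| ≤ C * |t - a| ^ r) :
    |v b - v a| ≤ C * |b - a| ^ (r + 1) / (r + 1) := by
  have hcont : Continuous fun t => C * |t - a| ^ r := by fun_prop (disch := exact Or.inr hr)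
  calc |v b - v a| = ‖∫ t in a..b, w t‖ := by
        rw [integral_eq_sub_of_hasDerivAt hv hw, Real.norm_eq_abs]
    _ ≤ ∫ t in Ι a b, |w t| := norm_integral_le_integral_norm_uIoc
    _ ≤ ∫ t in Ι a b, C * |t - a| ^ r :=
      setIntegral_mono_on hw.def'.abs (hcont.integrableOn_uIoc) measurableSet_uIoc
        fun t ht => hbound t (uIoc_subset_uIcc ht)
    _ = C * |b - a| ^ (r + 1) / (r + 1) := by
      rw [MeasureTheory.integral_const_mul, integral_rpow_abs_sub_uIoc a b (by linarith),
        mul_div_assoc]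

theorem stmt0_general (u u' u'' : ℝ → ℝ)
    (hu : ∀ x ∈ Icc (0:ℝ) 1, HasDerivAt u (u' x) x)
    (hu' : ∀ x ∈ Icc (0:ℝ) 1, HasDerivAt u' (u'' x) x)
    (hu''L2 : IntegrableOn (fun x => (u'' x) ^ 2) (Icc (0:ℝ) 1))
    (xs : ℝ) (hxs : xs ∈ Icc (0:ℝ) 1)
    (hd0 : u' xs = 0)
    (x : ℝ) (hx : x ∈ Icc (0:ℝ) 1) :
    u x - u xs ≤ (2/3) * (∫ s in Icc (0:ℝ) 1, (u'' s) ^ 2) ^ ((1:ℝ)/2)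
      * |x - xs| ^ ((3:ℝ)/2) := by
  set C := (∫ s in Icc (0:ℝ) 1, (u'' s) ^ 2) ^ ((1:ℝ)/2)
  have hsub : uIcc xs x ⊆ Icc 0 1 := uIcc_subset_Icc hxs hx
  have hu'_bound : ∀ t ∈ uIcc xs x, |u' t| ≤ C * |t - xs| ^ ((1:ℝ)/2) := fun t ht => by
    simpa only [hd0, sub_zero] using
      abs_sub_le_integral_sq_rpow_half_mul hu' hu''L2 hxs (hsub ht)
  have hu'_int : IntervalIntegrable u' volume xs x :=
    (continuousOn_of_forall_continuousAt fun t ht => (hu' t (hsub ht)).continuousAt)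
      |>.intervalIntegrable
  calc u x - u xs ≤ |u x - u xs| := le_abs_self _
    _ ≤ C * |x - xs| ^ ((1:ℝ)/2 + 1) / ((1:ℝ)/2 + 1) :=
      abs_sub_le_of_abs_deriv_le_rpow_abs_sub (by norm_num) (fun t ht => hu t (hsub ht))
        hu'_int hu'_bound
    _ = (2/3) * C * |x - xs| ^ ((3:ℝ)/2) := by norm_num; ring

/-- If `u ∈ H²([0,1])` attains its minimum at `x* ∈ [0,1]` (with `u'(x*) = 0`),
then for every `x ∈ [0,1]`, `u x - u_min ≤ (2/3) ‖u''‖_{L²} |x - x*|^{3/2}`. -/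
theorem stmt0 (u u' u'' : ℝ → ℝ)
    (hu : ∀ x ∈ Icc (0:ℝ) 1, HasDerivAt u (u' x) x)
    (hu' : ∀ x ∈ Icc (0:ℝ) 1, HasDerivAt u' (u'' x) x)
    (hu''L2 : IntegrableOn (fun x => (u'' x) ^ 2) (Icc (0:ℝ) 1))
    (xs : ℝ) (hxs : xs ∈ Icc (0:ℝ) 1)
    (hmin : ∀ x ∈ Icc (0:ℝ) 1, u xs ≤ u x)
    (hd0 : u' xs = 0)
    (x : ℝ) (hx : x ∈ Icc (0:ℝ) 1) :
    u x - u xs ≤ (2/3) * (∫ s in Icc (0:ℝ) 1, (u'' s) ^ 2) ^ ((1:ℝ)/2)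
      * |x - xs| ^ ((3:ℝ)/2) :=
  stmt0_general u u' u'' hu hu' hu''L2 xs hxs hd0 x hx
end

section
/- For a smooth nonnegative solution u of ∂_t u = −u(∂_x⁴ u − ∂_x² u) on 𝕋, the energy E(u) = ∫_𝕋 (∂_x² u)² + (∂_x u)² dx satisfies d/dt E(u) = −2 ∫_𝕋 u (∂_x⁴ u − ∂_x² u)² dx ≤ 0. -/
open MeasureTheory intervalIntegral

namespace Stmt3Aux

noncomputable def pd (v : ℝ × ℝ) (F : ℝ × ℝ → ℝ) : ℝ × ℝ → ℝ := fun p => fderiv ℝ F p v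

lemma contDiff_pd {F : ℝ × ℝ → ℝ} (hF : ContDiff ℝ (⊤ : ℕ∞) F) (v : ℝ × ℝ) :
    ContDiff ℝ (⊤ : ℕ∞) (pd v F) :=
  (hF.fderiv_right (le_refl _)).clm_apply contDiff_const

lemma hasDerivAt_slice_x {F : ℝ × ℝ → ℝ} (hF : ContDiff ℝ (⊤ : ℕ∞) F) (t x : ℝ) :
    HasDerivAt (fun y => F (t, y)) (pd (0, 1) F (t, x)) x := by
  have h : HasFDerivAt F (fderiv ℝ F (t, x)) (t, x) :=
    (hF.differentiable (by norm_cast) (t, x)).hasFDerivAt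
  have hline : HasDerivAt (fun y : ℝ => ((t, y) : ℝ × ℝ)) ((0 : ℝ), (1 : ℝ)) x := by
    simpa using (hasDerivAt_const x t).prodMk (hasDerivAt_id x)
  exact h.comp_hasDerivAt x hline

lemma hasDerivAt_slice_t {F : ℝ × ℝ → ℝ} (hF : ContDiff ℝ (⊤ : ℕ∞) F) (t x : ℝ) :
    HasDerivAt (fun s => F (s, x)) (pd (1, 0) F (t, x)) t := by
  have h : HasFDerivAt F (fderiv ℝ F (t, x)) (t, x) :=
    (hF.differentiable (by norm_cast) (t, x)).hasFDerivAt
  have hline : HasDerivAt (fun s : ℝ => ((s, x) : ℝ × ℝ)) ((1 : ℝ), (0 : ℝ)) t := by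
    simpa using (hasDerivAt_id t).prodMk (hasDerivAt_const t x)
  exact h.comp_hasDerivAt t hline

lemma pd_comm {F : ℝ × ℝ → ℝ} (hF : ContDiff ℝ (⊤ : ℕ∞) F) (v w : ℝ × ℝ) :
    pd v (pd w F) = pd w (pd v F) := by
  funext p
  have hdf : ContDiff ℝ (⊤ : ℕ∞) (fderiv ℝ F) := hF.fderiv_right (le_refl _)
  have key : ∀ a b : ℝ × ℝ, pd a (pd b F) p = fderiv ℝ (fderiv ℝ F) p a b := by
    intro a b
    have h1 : fderiv ℝ (fun q => fderiv ℝ F q b) p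
        = (fderiv ℝ F p).comp (fderiv ℝ (fun _ : ℝ × ℝ => b) p)
          + (fderiv ℝ (fderiv ℝ F) p).flip b :=
      fderiv_clm_apply (hdf.differentiable (by norm_cast) p) (differentiableAt_const b)
    have hb : pd b F = fun q => fderiv ℝ F q b := rfl
    simp [pd, hb, h1]
  rw [key, key]
  exact (hF.contDiffAt.isSymmSndFDerivAt (by rw [minSmoothness_of_isRCLikeNormedField]; exact WithTop.coe_le_coe.mpr le_top)) v w

lemma contDiff_pdIter {F : ℝ × ℝ → ℝ} (hF : ContDiff ℝ (⊤ : ℕ∞) F) (v : ℝ × ℝ) (n : ℕ) :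
    ContDiff ℝ (⊤ : ℕ∞) ((pd v)^[n] F) := by
  induction n with
  | zero => exact hF
  | succ n ih => rw [Function.iterate_succ_apply']; exact contDiff_pd ih v

lemma slice_iteratedDeriv {F : ℝ × ℝ → ℝ} (hF : ContDiff ℝ (⊤ : ℕ∞) F) (n : ℕ) (t x : ℝ) :
    iteratedDeriv n (fun y => F (t, y)) x = (pd (0, 1))^[n] F (t, x) := by
  induction n generalizing x with
  | zero => simp
  | succ n ih =>
    rw [iteratedDeriv_succ, Function.iterate_succ_apply']
    have hfun : iteratedDeriv n (fun y => F (t, y)) = fun x => (pd (0, 1))^[n] F (t, x) :=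
      funext fun x => ih x
    rw [hfun]
    exact (hasDerivAt_slice_x (contDiff_pdIter hF _ n) t x).deriv

lemma pdt_pdxIter {F : ℝ × ℝ → ℝ} (hF : ContDiff ℝ (⊤ : ℕ∞) F) (n : ℕ) :
    pd (1, 0) ((pd (0, 1))^[n] F) = (pd (0, 1))^[n] (pd (1, 0) F) := by
  induction n generalizing F hF with
  | zero => simp
  | succ n ih =>
    rw [Function.iterate_succ_apply, Function.iterate_succ_apply,
      ih (contDiff_pd hF _), pd_comm hF (1, 0) (0, 1)]

lemma hasDerivAt_t_iter {F : ℝ × ℝ → ℝ} (hF : ContDiff ℝ (⊤ : ℕ∞) F) (n : ℕ) (t x : ℝ) :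
    HasDerivAt (fun s => (pd (0, 1))^[n] F (s, x)) ((pd (0, 1))^[n] (pd (1, 0) F) (t, x)) t := by
  have h := hasDerivAt_slice_t (contDiff_pdIter hF (0, 1) n) t x
  rwa [pdt_pdxIter hF n] at h

lemma periodic_iteratedDeriv {f : ℝ → ℝ} (hf : ∀ x, f (x + 1) = f x) (n : ℕ) (x : ℝ) :
    iteratedDeriv n f (x + 1) = iteratedDeriv n f x := by
  induction n generalizing x with
  | zero => simpa using hf x
  | succ n ih =>
    rw [iteratedDeriv_succ]
    have h1 : (fun y => iteratedDeriv n f (y + 1)) = iteratedDeriv n f := funext fun y => ih y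
    calc deriv (iteratedDeriv n f) (x + 1)
        = deriv (fun y => iteratedDeriv n f (y + 1)) x := (deriv_comp_add_const (iteratedDeriv n f) 1 x).symm
      _ = deriv (iteratedDeriv n f) x := by rw [h1]

lemma ibp {f f' g g' : ℝ → ℝ} (hf : ∀ x, HasDerivAt f (f' x) x)
    (hg : ∀ x, HasDerivAt g (g' x) x)
    (cf' : Continuous f') (cg' : Continuous g') (hfg : f 1 * g 1 = f 0 * g 0) :
    ∫ x in (0:ℝ)..1, f' x * g x = - ∫ x in (0:ℝ)..1, f x * g' x := by
  have cf : Continuous f :=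
    (Differentiable.continuous fun x => (hf x).differentiableAt)
  have cg : Continuous g :=
    (Differentiable.continuous fun x => (hg x).differentiableAt)
  have key : ∫ x in (0:ℝ)..1, f' x * g x + f x * g' x = f 1 * g 1 - f 0 * g 0 :=
    intervalIntegral.integral_deriv_mul_eq_sub (fun x _ => hf x) (fun x _ => hg x)
      (cf'.intervalIntegrable _ _) (cg'.intervalIntegrable _ _)
  rw [intervalIntegral.integral_add (f := fun x => f' x * g x) (g := fun x => f x * g' x) ((cf'.mul cg).intervalIntegrable _ _)
    ((cf.mul cg').intervalIntegrable _ _), hfg, sub_self] at key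
  linarith

end Stmt3Aux

/-- For a smooth nonnegative periodic solution `u` of
`∂ₜ u = -u (∂ₓ⁴ u - ∂ₓ² u)` on `𝕋`, the energy `E(u) = ∫ (∂ₓ²u)² + (∂ₓu)² dx` satisfies
`d/dt E(u) = -2 ∫ u (∂ₓ⁴u - ∂ₓ²u)² dx ≤ 0`. -/
theorem stmt3 (u : ℝ → ℝ → ℝ)
    (hsm : ContDiff ℝ (⊤ : ℕ∞) (Function.uncurry u))
    (hper : ∀ t x, u t (x + 1) = u t x)
    (hnn : ∀ t x, 0 ≤ u t x)
    (hpde : ∀ t x, deriv (fun s => u s x) t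
      = - u t x * (iteratedDeriv 4 (fun y => u t y) x - iteratedDeriv 2 (fun y => u t y) x)) :
    ∀ t, HasDerivAt
        (fun s => ∫ x in (0:ℝ)..1,
          (iteratedDeriv 2 (fun y => u s y) x) ^ 2 + (deriv (fun y => u s y) x) ^ 2)
        (-2 * ∫ x in (0:ℝ)..1,
          u t x * (iteratedDeriv 4 (fun y => u t y) x - iteratedDeriv 2 (fun y => u t y) x) ^ 2) t
      ∧ (-2 * ∫ x in (0:ℝ)..1,
          u t x * (iteratedDeriv 4 (fun y => u t y) x - iteratedDeriv 2 (fun y => u t y) x) ^ 2)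
          ≤ 0 := by
  intro t
  open Stmt3Aux in
  have hF : ContDiff ℝ (⊤ : ℕ∞) (Function.uncurry u) := hsm.of_le (by simp)
  set F : ℝ × ℝ → ℝ := Function.uncurry u with hFdef
  -- iterated x-derivatives of u and of ∂ₜ u, as functions on ℝ × ℝ
  set fn : ℕ → ℝ × ℝ → ℝ := fun n => (Stmt3Aux.pd (0, 1))^[n] F with hfndef
  set wn : ℕ → ℝ × ℝ → ℝ := fun n => (Stmt3Aux.pd (0, 1))^[n] (Stmt3Aux.pd (1, 0) F) with hwndef
  have cfn : ∀ n, Continuous (fn n) := fun n =>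
    (Stmt3Aux.contDiff_pdIter hF _ n).continuous
  have cwn : ∀ n, Continuous (wn n) := fun n =>
    (Stmt3Aux.contDiff_pdIter (Stmt3Aux.contDiff_pd hF _) _ n).continuous
  -- time derivatives
  have hfd : ∀ (n : ℕ) (s x : ℝ), HasDerivAt (fun r => fn n (r, x)) (wn n (s, x)) s :=
    fun n s x => Stmt3Aux.hasDerivAt_t_iter hF n s x
  -- slice identification
  have hslice : ∀ (n : ℕ) (s x : ℝ), iteratedDeriv n (fun y => u s y) x = fn n (s, x) :=
    fun n s x => Stmt3Aux.slice_iteratedDeriv hF n s x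
  have hd1 : ∀ (s x : ℝ), deriv (fun y => u s y) x = fn 1 (s, x) :=
    fun s x => (Stmt3Aux.hasDerivAt_slice_x hF s x).deriv
  -- x-derivatives of slices
  have hgx : ∀ (n : ℕ) (s x : ℝ), HasDerivAt (fun y => fn n (s, y)) (fn (n + 1) (s, x)) x := by
    intro n s x
    have h := Stmt3Aux.hasDerivAt_slice_x (Stmt3Aux.contDiff_pdIter hF (0, 1) n) s x
    simp only [hfndef]
    rw [Function.iterate_succ_apply' (Stmt3Aux.pd (0, 1)) n F]
    exact h
  have hwx : ∀ (n : ℕ) (s x : ℝ), HasDerivAt (fun y => wn n (s, y)) (wn (n + 1) (s, x)) x := by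
    intro n s x
    have h := Stmt3Aux.hasDerivAt_slice_x
      (Stmt3Aux.contDiff_pdIter (Stmt3Aux.contDiff_pd hF (1, 0)) (0, 1) n) s x
    simp only [hwndef]
    rw [Function.iterate_succ_apply' (Stmt3Aux.pd (0, 1)) n (Stmt3Aux.pd (1, 0) F)]
    exact h
  -- value of the time derivative via the PDE
  have hw0 : ∀ (s x : ℝ), wn 0 (s, x) = -u s x * (fn 4 (s, x) - fn 2 (s, x)) := by
    intro s x
    have h := (Stmt3Aux.hasDerivAt_slice_t hF s x).deriv
    have : wn 0 (s, x) = deriv (fun r => u r x) s := h.symm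
    rw [this, hpde s x, hslice 4 s x, hslice 2 s x]
  -- periodicity of slices
  have hgper : ∀ (n : ℕ) (s x : ℝ), fn n (s, x + 1) = fn n (s, x) := by
    intro n s x
    rw [← hslice n s (x + 1), ← hslice n s x]
    exact Stmt3Aux.periodic_iteratedDeriv (hper s) n x
  have hw0per : ∀ (s x : ℝ), wn 0 (s, x + 1) = wn 0 (s, x) := by
    intro s x
    rw [hw0, hw0, hper, hgper, hgper]
  have hwper : ∀ (n : ℕ) (s x : ℝ), wn n (s, x + 1) = wn n (s, x) := by
    intro n s x
    have hs : ∀ y : ℝ, wn n (s, y) = iteratedDeriv n (fun z => wn 0 (s, z)) y := by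
      intro y
      exact (Stmt3Aux.slice_iteratedDeriv (Stmt3Aux.contDiff_pd hF (1, 0)) n s y).symm
    rw [hs, hs]
    exact Stmt3Aux.periodic_iteratedDeriv (fun y => hw0per s y) n x
  -- the t-derivative of the integrand
  set φ : ℝ → ℝ → ℝ :=
    fun s x => 2 * fn 2 (s, x) * wn 2 (s, x) + 2 * fn 1 (s, x) * wn 1 (s, x) with hφdef
  have hφd : ∀ (s x : ℝ),
      HasDerivAt (fun r => fn 2 (r, x) ^ 2 + fn 1 (r, x) ^ 2) (φ s x) s := by
    intro s x
    have h2 := ((hfd 2 s x).pow 2).add ((hfd 1 s x).pow 2)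
    have hval : φ s x = (2 : ℕ) * fn 2 (s, x) ^ (2 - 1) * wn 2 (s, x)
        + (2 : ℕ) * fn 1 (s, x) ^ (2 - 1) * wn 1 (s, x) := by
      push_cast
      ring
    rw [hval]
    exact h2
  have cφ : Continuous (fun p : ℝ × ℝ => φ p.1 p.2) := by
    apply Continuous.add
    · exact (continuous_const.mul (cfn 2)).mul (cwn 2)
    · exact (continuous_const.mul (cfn 1)).mul (cwn 1)
  -- differentiation under the integral sign
  obtain ⟨C, hC⟩ : ∃ C, ∀ p ∈ (Metric.closedBall t 1 ×ˢ Set.uIcc (0:ℝ) 1),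
      ‖φ p.1 p.2‖ ≤ C :=
    ((isCompact_closedBall t 1).prod isCompact_uIcc).exists_bound_of_continuousOn
      (cφ.norm.continuousOn) |>.imp fun C h => fun p hp => by simpa using h p hp
  have cslice : ∀ s : ℝ, Continuous fun x => fn 2 (s, x) ^ 2 + fn 1 (s, x) ^ 2 := by
    intro s
    have hc : Continuous fun x : ℝ => ((s, x) : ℝ × ℝ) := continuous_const.prodMk continuous_id
    exact (((cfn 2).comp hc).pow 2).add (((cfn 1).comp hc).pow 2)
  have cφslice : ∀ s : ℝ, Continuous fun x => φ s x := by
    intro s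
    have hc : Continuous fun x : ℝ => ((s, x) : ℝ × ℝ) := continuous_const.prodMk continuous_id
    exact cφ.comp hc
  have main := intervalIntegral.hasDerivAt_integral_of_dominated_loc_of_deriv_le
    (F := fun s x => fn 2 (s, x) ^ 2 + fn 1 (s, x) ^ 2) (F' := φ) (x₀ := t)
    (a := (0:ℝ)) (b := 1) (bound := fun _ => C) (μ := MeasureTheory.volume)
    (s := Metric.ball t 1) (Metric.ball_mem_nhds t one_pos)
    (Filter.Eventually.of_forall fun s => ((cslice s).aestronglyMeasurable).restrict)
    ((cslice t).intervalIntegrable _ _)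
    ((cφslice t).aestronglyMeasurable).restrict
    (MeasureTheory.ae_of_all _ fun x hx s hs => hC (s, x)
      ⟨Metric.ball_subset_closedBall hs, Set.uIoc_subset_uIcc hx⟩)
    (intervalIntegrable_const)
    (MeasureTheory.ae_of_all _ fun x _ s _ => hφd s x)
  have hderiv : HasDerivAt
      (fun s => ∫ x in (0:ℝ)..1, fn 2 (s, x) ^ 2 + fn 1 (s, x) ^ 2)
      (∫ x in (0:ℝ)..1, φ t x) t := main.2
  -- now fix t and compute the integral of φ t by parts
  have cgt : ∀ n : ℕ, Continuous fun x => fn n (t, x) := fun n =>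
    (cfn n).comp (continuous_const.prodMk continuous_id)
  have cwt : ∀ n : ℕ, Continuous fun x => wn n (t, x) := fun n =>
    (cwn n).comp (continuous_const.prodMk continuous_id)
  have hper01 : ∀ n : ℕ, fn n (t, 1) = fn n (t, 0) := by
    intro n; simpa using hgper n t 0
  have hwper01 : ∀ n : ℕ, wn n (t, 1) = wn n (t, 0) := by
    intro n; simpa using hwper n t 0
  -- integration by parts steps
  have I1 : ∫ x in (0:ℝ)..1, wn 1 (t, x) * fn 1 (t, x)
      = - ∫ x in (0:ℝ)..1, wn 0 (t, x) * fn 2 (t, x) :=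
    Stmt3Aux.ibp (hwx 0 t) (hgx 1 t) (cwt 1) (cgt 2)
      (by rw [hwper01 0, hper01 1])
  have I2 : ∫ x in (0:ℝ)..1, wn 2 (t, x) * fn 2 (t, x)
      = - ∫ x in (0:ℝ)..1, wn 1 (t, x) * fn 3 (t, x) :=
    Stmt3Aux.ibp (hwx 1 t) (hgx 2 t) (cwt 2) (cgt 3)
      (by rw [hwper01 1, hper01 2])
  have I3 : ∫ x in (0:ℝ)..1, wn 1 (t, x) * fn 3 (t, x)
      = - ∫ x in (0:ℝ)..1, wn 0 (t, x) * fn 4 (t, x) :=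
    Stmt3Aux.ibp (hwx 0 t) (hgx 3 t) (cwt 1) (cgt 4)
      (by rw [hwper01 0, hper01 3])
  have hφint : (∫ x in (0:ℝ)..1, φ t x)
      = 2 * (∫ x in (0:ℝ)..1, wn 2 (t, x) * fn 2 (t, x))
        + 2 * (∫ x in (0:ℝ)..1, wn 1 (t, x) * fn 1 (t, x)) := by
    rw [← intervalIntegral.integral_const_mul, ← intervalIntegral.integral_const_mul,
      ← intervalIntegral.integral_add (f := fun x => 2 * (wn 2 (t, x) * fn 2 (t, x)))
        (g := fun x => 2 * (wn 1 (t, x) * fn 1 (t, x)))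
        ((continuous_const.mul ((cwt 2).mul (cgt 2))).intervalIntegrable _ _)
        ((continuous_const.mul ((cwt 1).mul (cgt 1))).intervalIntegrable _ _)]
    exact intervalIntegral.integral_congr fun x _ => by simp only [hφdef]; ring
  have hsplit : (∫ x in (0:ℝ)..1, u t x * (fn 4 (t, x) - fn 2 (t, x)) ^ 2)
      = -(∫ x in (0:ℝ)..1, wn 0 (t, x) * fn 4 (t, x))
        + (∫ x in (0:ℝ)..1, wn 0 (t, x) * fn 2 (t, x)) := by
    rw [← intervalIntegral.integral_neg,
      ← intervalIntegral.integral_add (f := fun x => -(wn 0 (t, x) * fn 4 (t, x)))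
        (g := fun x => wn 0 (t, x) * fn 2 (t, x))
        ((((cwt 0).mul (cgt 4)).neg).intervalIntegrable _ _)
        (((cwt 0).mul (cgt 2)).intervalIntegrable _ _)]
    refine intervalIntegral.integral_congr fun x _ => ?_
    rw [hw0 t x]
    ring
  have hval : (∫ x in (0:ℝ)..1, φ t x)
      = -2 * ∫ x in (0:ℝ)..1, u t x * (fn 4 (t, x) - fn 2 (t, x)) ^ 2 := by
    rw [hφint, I2, I3, I1]
    linarith [hsplit]
  -- rewrite the statement's integrals in terms of fn
  have hEeq : (fun s => ∫ x in (0:ℝ)..1,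
        (iteratedDeriv 2 (fun y => u s y) x) ^ 2 + (deriv (fun y => u s y) x) ^ 2)
      = fun s => ∫ x in (0:ℝ)..1, fn 2 (s, x) ^ 2 + fn 1 (s, x) ^ 2 := by
    funext s
    exact intervalIntegral.integral_congr fun x _ => by rw [hslice 2 s x, hd1 s x]
  have hIeq : (∫ x in (0:ℝ)..1,
        u t x * (iteratedDeriv 4 (fun y => u t y) x - iteratedDeriv 2 (fun y => u t y) x) ^ 2)
      = ∫ x in (0:ℝ)..1, u t x * (fn 4 (t, x) - fn 2 (t, x)) ^ 2 :=
    intervalIntegral.integral_congr fun x _ => by rw [hslice 4 t x, hslice 2 t x]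
  constructor
  · rw [hEeq, hIeq, ← hval]
    exact hderiv
  · rw [hIeq]
    have hnonneg : 0 ≤ ∫ x in (0:ℝ)..1, u t x * (fn 4 (t, x) - fn 2 (t, x)) ^ 2 :=
      intervalIntegral.integral_nonneg (by norm_num)
        (fun x _ => mul_nonneg (hnn t x) (sq_nonneg _))
    linarith
end

section
/- For a smooth strictly positive solution u_ε of the regularized equation ∂_t u_ε = −(u_ε^{1+α}/(u_ε^α + ε^α))(∂_x⁴ u_ε − ∂_x² u_ε) on 𝕋 with 0 < α < 1, the quantity ∫_𝕋 ((ε^α/α) u_ε^{−α} − ln u_ε) dx is conserved in time. -/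
open MeasureTheory intervalIntegral
open scoped ContDiff

/-- Partial derivative in the second variable of a smooth function of two variables
is smooth. -/
lemma pd_smooth {f : ℝ × ℝ → ℝ} (hf : ContDiff ℝ ∞ f) :
    ContDiff ℝ ∞ (fun p : ℝ × ℝ => deriv (fun y => f (p.1, y)) p.2) := by
  have key : ∀ p : ℝ × ℝ, deriv (fun y => f (p.1, y)) p.2 = fderiv ℝ f p (0, 1) := by
    intro p
    have h1 : HasDerivAt (fun y : ℝ => (p.1, y)) ((0 : ℝ), (1 : ℝ)) p.2 :=
      (hasDerivAt_const _ _).prodMk (hasDerivAt_id _)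
    have h2 : HasFDerivAt f (fderiv ℝ f p) p :=
      (hf.differentiable (by simp) p).hasFDerivAt
    have h3 : HasDerivAt (fun y => f (p.1, y)) (fderiv ℝ f p (0, 1)) p.2 := by
      have := h2.comp_hasDerivAt p.2 (by simpa using h1)
      exact this
    exact h3.deriv
  have h4 : ContDiff ℝ ∞ (fun p : ℝ × ℝ => fderiv ℝ f p (0, 1)) := by
    have : (∞ : WithTop ℕ∞) + 1 ≤ ∞ := by
      exact_mod_cast le_refl (⊤ : ℕ∞)
    exact (hf.fderiv_right this).clm_apply contDiff_const
  have e : (fun p : ℝ × ℝ => deriv (fun y => f (p.1, y)) p.2)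
      = fun p : ℝ × ℝ => fderiv ℝ f p (0, 1) := funext key
  rw [e]; exact h4

/-- The iterated partial derivatives in the second variable of a smooth function of two
variables are smooth. -/
lemma pdk_smooth {u : ℝ → ℝ → ℝ} (hsm : ContDiff ℝ ∞ (Function.uncurry u)) (k : ℕ) :
    ContDiff ℝ ∞ (fun p : ℝ × ℝ => iteratedDeriv k (u p.1) p.2) := by
  induction k with
  | zero => simp only [iteratedDeriv_zero]; exact hsm
  | succ k IH =>
    have h := pd_smooth IH
    have e : (fun p : ℝ × ℝ => iteratedDeriv (k + 1) (u p.1) p.2)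
        = fun p : ℝ × ℝ => deriv (fun y => iteratedDeriv k (u p.1) y) p.2 := by
      funext p; rw [iteratedDeriv_succ]
    rw [e]; exact h

/-- For a smooth strictly positive periodic solution `u_ε` of the regularized
equation `∂ₜ u_ε = -(u_ε^{1+α}/(u_ε^α + ε^α)) (∂ₓ⁴ u_ε - ∂ₓ² u_ε)` with `0 < α < 1`, `ε > 0`,
the quantity `∫ ( (ε^α/α) u_ε^{-α} - ln u_ε ) dx` is conserved in time. -/
theorem stmt5 (α ε : ℝ) (hα : 0 < α) (hα1 : α < 1) (hε : 0 < ε)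
    (u : ℝ → ℝ → ℝ)
    (hsm : ContDiff ℝ (⊤ : ℕ∞) (Function.uncurry u))
    (hper : ∀ t x, u t (x + 1) = u t x)
    (hpos : ∀ t x, 0 < u t x)
    (hpde : ∀ t x, deriv (fun s => u s x) t
      = - ((u t x) ^ (1 + α) / ((u t x) ^ α + ε ^ α))
          * (iteratedDeriv 4 (fun y => u t y) x - iteratedDeriv 2 (fun y => u t y) x)) :
    ∀ t, HasDerivAt
      (fun s => ∫ x in (0:ℝ)..1, (ε ^ α / α) * (u s x) ^ (-α) - Real.log (u s x)) 0 t := by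
  intro t
  have hsm' : ContDiff ℝ ∞ (Function.uncurry u) := hsm.of_le (by simp)
  have htop : (1 : WithTop ℕ∞) ≤ ∞ := by exact_mod_cast le_top
  have hus : ∀ s, Continuous (u s) := fun s =>
    hsm'.continuous.comp (continuous_const.prodMk continuous_id)
  -- continuity of the spatial iterated derivatives, jointly in (s, x)
  have hG : Continuous (fun p : ℝ × ℝ =>
      iteratedDeriv 4 (u p.1) p.2 - iteratedDeriv 2 (u p.1) p.2) :=
    (pdk_smooth hsm' 4).continuous.sub (pdk_smooth hsm' 2).continuous
  -- continuity of the integrand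
  have hFc : ∀ s, Continuous (fun x => (ε ^ α / α) * (u s x) ^ (-α) - Real.log (u s x)) := by
    intro s
    have h1 : Continuous fun x => (u s x) ^ (-α) :=
      (hus s).rpow_const fun x => Or.inl (hpos s x).ne'
    exact (continuous_const.mul h1).sub ((hus s).log fun x => (hpos s x).ne')
  -- uniform bound on a compact neighborhood
  obtain ⟨C, hC⟩ := (((isCompact_closedBall t 1).prod (isCompact_uIcc
      (a := (0:ℝ)) (b := 1)))).exists_bound_of_continuousOn hG.continuousOn
  -- time derivative of the integrand
  have h_diff : ∀ x : ℝ, ∀ s : ℝ,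
      HasDerivAt (fun s' => (ε ^ α / α) * (u s' x) ^ (-α) - Real.log (u s' x))
        (iteratedDeriv 4 (u s) x - iteratedDeriv 2 (u s) x) s := by
    intro x s
    have hA : 0 < u s x := hpos s x
    set A : ℝ := u s x with hAdef
    set D : ℝ := iteratedDeriv 4 (u s) x - iteratedDeriv 2 (u s) x with hDdef
    have hD : Differentiable ℝ (fun s' : ℝ => u s' x) :=
      (hsm'.differentiable (by simp)).comp (differentiable_id.prodMk (differentiable_const x))
    have hu' : HasDerivAt (fun s' => u s' x)
        (- (A ^ (1 + α) / (A ^ α + ε ^ α)) * D) s := by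
      have h := (hD s).hasDerivAt
      rw [hpde s x] at h
      exact h
    set V : ℝ := - (A ^ (1 + α) / (A ^ α + ε ^ α)) * D with hVdef
    have h1 : HasDerivAt (fun s' => (u s' x) ^ (-α)) (-α * A ^ (-α - 1) * V) s :=
      by have h := (Real.hasDerivAt_rpow_const (p := -α) (Or.inl hA.ne')).comp s hu'; exact h
    have h2 : HasDerivAt (fun s' => Real.log (u s' x)) (A⁻¹ * V) s :=
      by have h := (Real.hasDerivAt_log hA.ne').comp s hu'; exact h
    have h3 : HasDerivAt (fun s' => (ε ^ α / α) * (u s' x) ^ (-α) - Real.log (u s' x))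
        ((ε ^ α / α) * (-α * A ^ (-α - 1) * V) - A⁻¹ * V) s := (h1.const_mul _).sub h2
    have halg : (ε ^ α / α) * (-α * A ^ (-α - 1) * V) - A⁻¹ * V = D := by
      have hAα : (0:ℝ) < A ^ α := Real.rpow_pos_of_pos hA α
      have hεα : (0:ℝ) < ε ^ α := Real.rpow_pos_of_pos hε α
      have hden : A ^ α + ε ^ α ≠ 0 := by positivity
      have e1 : A ^ (1 + α) = A * A ^ α := by
        rw [Real.rpow_add hA, Real.rpow_one]
      have e2 : A ^ (-α - 1) = (A * A ^ α)⁻¹ := by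
        rw [show -α - 1 = -(1 + α) by ring, Real.rpow_neg hA.le, e1]
      rw [hVdef, e1, e2]
      field_simp
      ring
    rw [halg] at h3
    exact h3
  have main := intervalIntegral.hasDerivAt_integral_of_dominated_loc_of_deriv_le
    (F := fun s x => (ε ^ α / α) * (u s x) ^ (-α) - Real.log (u s x))
    (F' := fun s x => iteratedDeriv 4 (u s) x - iteratedDeriv 2 (u s) x)
    (bound := fun _ => C) (a := (0:ℝ)) (b := 1) (μ := volume) (x₀ := t)
    (Metric.ball_mem_nhds t zero_lt_one)
    (Filter.Eventually.of_forall fun s => (hFc s).aestronglyMeasurable)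
    ((hFc t).intervalIntegrable _ _)
    ((hG.comp (continuous_const.prodMk continuous_id)).aestronglyMeasurable)
    (Filter.Eventually.of_forall (by
      intro x hx s hs
      have hmem : ((s, x) : ℝ × ℝ) ∈ Metric.closedBall t 1 ×ˢ Set.uIcc (0:ℝ) 1 := by
        refine ⟨Metric.ball_subset_closedBall hs, ?_⟩
        rw [Set.uIcc, Set.mem_Icc]
        rw [Set.uIoc, Set.mem_Ioc] at hx
        exact ⟨hx.1.le, hx.2⟩
      exact hC (s, x) hmem))
    (intervalIntegrable_const)
    (Filter.Eventually.of_forall (by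
      intro x _ s _
      exact h_diff x s))
  -- the derivative integral vanishes
  have hut : ContDiff ℝ ∞ (u t) :=
    hsm'.comp (contDiff_const.prodMk contDiff_id)
  have hiter : ∀ k : ℕ, ContDiff ℝ ∞ (iteratedDeriv k (u t)) := by
    intro k
    rw [iteratedDeriv_eq_iterate]
    exact ContDiff.iterate_deriv k hut
  have hper' : ∀ k : ℕ, ∀ x : ℝ,
      iteratedDeriv k (u t) (x + 1) = iteratedDeriv k (u t) x := by
    intro k x
    have heq : (fun z => u t (z + 1)) = u t := funext fun z => hper t z
    calc iteratedDeriv k (u t) (x + 1)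
        = iteratedDeriv k (fun z => u t (z + 1)) x := by
          rw [iteratedDeriv_comp_add_const]
      _ = iteratedDeriv k (u t) x := by rw [heq]
  have key : ∀ k : ℕ, (∫ x in (0:ℝ)..1, iteratedDeriv (k + 1) (u t) x) = 0 := by
    intro k
    have hdif : ∀ x ∈ Set.uIcc (0:ℝ) 1, DifferentiableAt ℝ (iteratedDeriv k (u t)) x :=
      fun x _ => ((hiter k).differentiable (by simp)) x
    have hcont : IntervalIntegrable (deriv (iteratedDeriv k (u t))) volume 0 1 := by
      have h := hiter (k + 1)
      rw [iteratedDeriv_succ] at h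
      exact h.continuous.intervalIntegrable _ _
    simp only [iteratedDeriv_succ]
    rw [intervalIntegral.integral_deriv_eq_sub hdif hcont]
    have := hper' k 0
    rw [zero_add] at this
    rw [this, sub_self]
  have h0 : (∫ x in (0:ℝ)..1,
      (iteratedDeriv 4 (u t) x - iteratedDeriv 2 (u t) x)) = 0 := by
    rw [intervalIntegral.integral_sub
      (((hiter 4).continuous).intervalIntegrable _ _)
      (((hiter 2).continuous).intervalIntegrable _ _),
      key 3, key 1, sub_self]
  have := main.2
  rw [h0] at this
  exact this
end

section
/- For a smooth strictly positive solution u_ε of the regularized equation ∂_t u_ε = −(u_ε^{1+α}/(u_ε^α + ε^α))(∂_x⁴ u_ε − ∂_x² u_ε) on 𝕋 with 0 < α < 1, one has d/dt ∫_𝕋 ( (ε^α/(1−α)) u_ε^{1−α} + u_ε ) dx = −∫_𝕋 (∂_x² u_ε)² + (∂_x u_ε)² dx ≤ 0. -/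
open MeasureTheory intervalIntegral Function

lemma slice_hasDerivAt {u : ℝ → ℝ → ℝ} (h : ContDiff ℝ (⊤ : ℕ∞) (uncurry u)) (s x : ℝ) :
    HasDerivAt (u s) (fderiv ℝ (uncurry u) (s, x) (0, 1)) x := by
  have h1 : HasDerivAt (fun y : ℝ => ((s, y) : ℝ × ℝ)) ((0 : ℝ), (1 : ℝ)) x :=
    (hasDerivAt_const x s).prodMk (hasDerivAt_id x)
  exact (h.differentiable (by simp) (s, x)).hasFDerivAt.comp_hasDerivAt x h1

lemma cd_deriv {u : ℝ → ℝ → ℝ} (h : ContDiff ℝ (⊤ : ℕ∞) (uncurry u)) :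
    ContDiff ℝ (⊤ : ℕ∞) (uncurry fun s x => deriv (u s) x) := by
  have he : (uncurry fun s x => deriv (u s) x)
      = fun p : ℝ × ℝ => fderiv ℝ (uncurry u) p ((0 : ℝ), (1 : ℝ)) := by
    ext p
    exact (slice_hasDerivAt h p.1 p.2).deriv
  rw [he]
  exact (h.fderiv_right (by simp)).clm_apply contDiff_const

lemma periodic_deriv' (f : ℝ → ℝ) (hf : Function.Periodic f 1) :
    Function.Periodic (deriv f) 1 := by
  intro x
  have hfe : f = fun y => f (y + 1) := funext fun y => (hf y).symm
  calc deriv f (x + 1) = deriv (fun y => f (y + 1)) x := (deriv_comp_add_const f 1 x).symm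
    _ = deriv f x := by rw [← hfe]

/-- For a smooth strictly positive periodic solution `u_ε` of the regularized
equation `∂ₜ u_ε = -(u_ε^{1+α}/(u_ε^α + ε^α)) (∂ₓ⁴ u_ε - ∂ₓ² u_ε)` with `0 < α < 1`, `ε > 0`,
one has `d/dt ∫ ( (ε^α/(1-α)) u_ε^{1-α} + u_ε ) dx = -∫ (∂ₓ²u_ε)² + (∂ₓu_ε)² dx ≤ 0`. -/
theorem stmt6 (α ε : ℝ) (hα : 0 < α) (hα1 : α < 1) (hε : 0 < ε)
    (u : ℝ → ℝ → ℝ)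
    (hsm : ContDiff ℝ (⊤ : ℕ∞) (Function.uncurry u))
    (hper : ∀ t x, u t (x + 1) = u t x)
    (hpos : ∀ t x, 0 < u t x)
    (hpde : ∀ t x, deriv (fun s => u s x) t
      = - ((u t x) ^ (1 + α) / ((u t x) ^ α + ε ^ α))
          * (iteratedDeriv 4 (fun y => u t y) x - iteratedDeriv 2 (fun y => u t y) x)) :
    ∀ t, HasDerivAt
        (fun s => ∫ x in (0:ℝ)..1, (ε ^ α / (1 - α)) * (u s x) ^ (1 - α) + u s x)
        (-(∫ x in (0:ℝ)..1,
            (iteratedDeriv 2 (fun y => u t y) x) ^ 2 + (deriv (fun y => u t y) x) ^ 2)) t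
      ∧ (-(∫ x in (0:ℝ)..1,
            (iteratedDeriv 2 (fun y => u t y) x) ^ 2 + (deriv (fun y => u t y) x) ^ 2)) ≤ 0 := by
  intro t
  set d1 : ℝ → ℝ → ℝ := fun s x => deriv (u s) x with hd1def
  set d2 : ℝ → ℝ → ℝ := fun s x => deriv (d1 s) x with hd2def
  set d3 : ℝ → ℝ → ℝ := fun s x => deriv (d2 s) x with hd3def
  set d4 : ℝ → ℝ → ℝ := fun s x => deriv (d3 s) x with hd4def
  have c1 : ContDiff ℝ (⊤ : ℕ∞) (uncurry d1) := cd_deriv hsm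
  have c2 : ContDiff ℝ (⊤ : ℕ∞) (uncurry d2) := cd_deriv c1
  have c3 : ContDiff ℝ (⊤ : ℕ∞) (uncurry d3) := cd_deriv c2
  have c4 : ContDiff ℝ (⊤ : ℕ∞) (uncurry d4) := cd_deriv c3
  -- slices are continuous in x
  have sliceCont : ∀ (v : ℝ → ℝ → ℝ), ContDiff ℝ (⊤ : ℕ∞) (uncurry v) → ∀ s, Continuous (v s) := by
    intro v hv s
    exact hv.continuous.comp (continuous_const.prodMk continuous_id)
  -- iteratedDeriv identities
  have hit2 : ∀ s x, iteratedDeriv 2 (fun y => u s y) x = d2 s x := by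
    intro s x
    rw [show (2:ℕ) = 1 + 1 from rfl, iteratedDeriv_succ, iteratedDeriv_one]
  have hit4 : ∀ s x, iteratedDeriv 4 (fun y => u s y) x = d4 s x := by
    intro s x
    rw [show (4:ℕ) = 3 + 1 from rfl, iteratedDeriv_succ,
      show (3:ℕ) = 2 + 1 from rfl, iteratedDeriv_succ,
      show (2:ℕ) = 1 + 1 from rfl, iteratedDeriv_succ, iteratedDeriv_one]
  -- periodicity of x-derivatives
  have per0 : ∀ s, Function.Periodic (u s) 1 := fun s x => hper s x
  have per1 : ∀ s, Function.Periodic (d1 s) 1 := fun s => periodic_deriv' _ (per0 s)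
  have per2 : ∀ s, Function.Periodic (d2 s) 1 := fun s => periodic_deriv' _ (per1 s)
  have per3 : ∀ s, Function.Periodic (d3 s) 1 := fun s => periodic_deriv' _ (per2 s)
  -- time derivative of u at any point
  have hts : ∀ s x, HasDerivAt (fun τ => u τ x)
      (-(u s x ^ (1 + α) / (u s x ^ α + ε ^ α)) * (d4 s x - d2 s x)) s := by
    intro s x
    have hdiff : DifferentiableAt ℝ (fun τ => u τ x) s :=
      ((hsm.comp ((contDiff_id).prodMk contDiff_const)).differentiable (by simp)) s
    have h := hdiff.hasDerivAt
    rw [hpde s x, hit2, hit4] at h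
    exact h
  -- the parametric family and its time derivative
  set F : ℝ → ℝ → ℝ := fun s x => (ε ^ α / (1 - α)) * (u s x) ^ (1 - α) + u s x with hFdef
  set F' : ℝ → ℝ → ℝ := fun s x => -(u s x * (d4 s x - d2 s x)) with hF'def
  have hαne : (1 : ℝ) - α ≠ 0 := by linarith
  have h_diff : ∀ s x, HasDerivAt (fun τ => F τ x) (F' s x) s := by
    intro s x
    have hg := hts s x
    have h1 : HasDerivAt (fun τ => (u τ x) ^ (1 - α))
        ((-(u s x ^ (1 + α) / (u s x ^ α + ε ^ α)) * (d4 s x - d2 s x)) *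
          (1 - α) * (u s x) ^ (1 - α - 1)) s :=
      hg.rpow_const (Or.inl (hpos s x).ne')
    have h2 := (h1.const_mul (ε ^ α / (1 - α))).add hg
    refine h2.congr_deriv ?_
    have hG : (0:ℝ) < u s x := hpos s x
    have hA : (0:ℝ) < (u s x) ^ α := Real.rpow_pos_of_pos hG α
    have hE : (0:ℝ) < ε ^ α := Real.rpow_pos_of_pos hε α
    have e1 : (u s x) ^ (1 - α - 1) = ((u s x) ^ α)⁻¹ := by
      rw [show (1:ℝ) - α - 1 = -α by ring, Real.rpow_neg hG.le]
    have e2 : (u s x) ^ (1 + α) = u s x * (u s x) ^ α := by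
      rw [Real.rpow_add hG, Real.rpow_one]
    rw [e1, e2]
    field_simp
    ring
  -- continuity of F' jointly
  have contF' : Continuous (fun p : ℝ × ℝ => F' p.1 p.2) := by
    have : (fun p : ℝ × ℝ => F' p.1 p.2)
        = fun p => -(uncurry u p * (uncurry d4 p - uncurry d2 p)) := rfl
    rw [this]
    exact (hsm.continuous.mul (c4.continuous.sub c2.continuous)).neg
  -- bound on a compact neighborhood
  obtain ⟨C, hC⟩ := (((isCompact_Icc (a := t - 1) (b := t + 1)).prod
      (isCompact_Icc (a := (0:ℝ)) (b := 1)))).exists_bound_of_continuousOn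
      contF'.continuousOn
  have key := intervalIntegral.hasDerivAt_integral_of_dominated_loc_of_deriv_le
    (F := F) (F' := fun s x => F' s x) (x₀ := t) (a := 0) (b := 1) (μ := volume)
    (bound := fun _ => C) (s := Metric.ball t 1) (Metric.ball_mem_nhds t one_pos)
    (Filter.Eventually.of_forall fun s => ((by
        have : Continuous (F s) := by
          have hcu : Continuous (u s) := sliceCont u hsm s
          exact (continuous_const.mul (hcu.rpow_const (fun x => Or.inl (hpos s x).ne'))).add hcu
        exact this.aestronglyMeasurable) : AEStronglyMeasurable (F s) _))
    (by
      have hcu : Continuous (u t) := sliceCont u hsm t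
      exact ((continuous_const.mul (hcu.rpow_const (fun x => Or.inl (hpos t x).ne'))).add
        hcu).intervalIntegrable 0 1)
    ((contF'.comp (continuous_const.prodMk continuous_id)).aestronglyMeasurable)
    (Filter.Eventually.of_forall (fun x hx s hs => by
      have hx' : x ∈ Set.Icc (0:ℝ) 1 := Set.Ioc_subset_Icc_self (by
        simpa [Set.uIoc_of_le (zero_le_one : (0:ℝ) ≤ 1)] using hx)
      have hs' : s ∈ Set.Icc (t - 1) (t + 1) := by
        have := Metric.mem_ball.mp hs
        rw [Real.dist_eq] at this
        constructor <;> [linarith [abs_lt.mp this] ; linarith [abs_lt.mp this]]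
      exact hC (s, x) ⟨hs', hx'⟩))
    ((continuous_const).intervalIntegrable 0 1)
    (Filter.Eventually.of_forall (fun x _ s _ => h_diff s x))
  have hDeriv := key.2
  -- slice continuity at t
  have cf0 : Continuous (u t) := sliceCont u hsm t
  have cf1 : Continuous (d1 t) := sliceCont d1 c1 t
  have cf2 : Continuous (d2 t) := sliceCont d2 c2 t
  have cf3 : Continuous (d3 t) := sliceCont d3 c3 t
  have cf4 : Continuous (d4 t) := sliceCont d4 c4 t
  -- HasDerivAt chain in x at time t
  have hder : ∀ (v w : ℝ → ℝ → ℝ), ContDiff ℝ (⊤ : ℕ∞) (uncurry v) → (w = fun s x => deriv (v s) x) →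
      ∀ x, HasDerivAt (v t) (w t x) x := by
    intro v w hv hw x
    have : DifferentiableAt ℝ (v t) x :=
      ((hv.comp (contDiff_const.prodMk contDiff_id)).differentiable (by simp)) x
    subst hw
    exact this.hasDerivAt
  have hd0 : ∀ x, HasDerivAt (u t) (d1 t x) x := hder u d1 hsm hd1def
  have hD1 : ∀ x, HasDerivAt (d1 t) (d2 t x) x := hder d1 d2 c1 hd2def
  have hD2 : ∀ x, HasDerivAt (d2 t) (d3 t x) x := hder d2 d3 c2 hd3def
  have hD3 : ∀ x, HasDerivAt (d3 t) (d4 t x) x := hder d3 d4 c3 hd4def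
  -- integration by parts
  have ibp1 : ∫ x in (0:ℝ)..1, u t x * d4 t x
      = u t 1 * d3 t 1 - u t 0 * d3 t 0 - ∫ x in (0:ℝ)..1, d1 t x * d3 t x :=
    integral_mul_deriv_eq_deriv_mul (fun x _ => hd0 x) (fun x _ => hD3 x)
      (cf1.intervalIntegrable 0 1) (cf4.intervalIntegrable 0 1)
  have ibp2 : ∫ x in (0:ℝ)..1, d1 t x * d3 t x
      = d1 t 1 * d2 t 1 - d1 t 0 * d2 t 0 - ∫ x in (0:ℝ)..1, d2 t x * d2 t x :=
    integral_mul_deriv_eq_deriv_mul (fun x _ => hD1 x) (fun x _ => hD2 x)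
      (cf2.intervalIntegrable 0 1) (cf3.intervalIntegrable 0 1)
  have ibp3 : ∫ x in (0:ℝ)..1, u t x * d2 t x
      = u t 1 * d1 t 1 - u t 0 * d1 t 0 - ∫ x in (0:ℝ)..1, d1 t x * d1 t x :=
    integral_mul_deriv_eq_deriv_mul (fun x _ => hd0 x) (fun x _ => hD1 x)
      (cf1.intervalIntegrable 0 1) (cf2.intervalIntegrable 0 1)
  have b0 : u t 1 = u t 0 := by simpa using hper t 0
  have b1 : d1 t 1 = d1 t 0 := by simpa using per1 t 0
  have b2 : d2 t 1 = d2 t 0 := by simpa using per2 t 0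
  have b3 : d3 t 1 = d3 t 0 := by simpa using per3 t 0
  rw [b0, b3] at ibp1
  rw [b1, b2] at ibp2
  rw [b0, b1] at ibp3
  have E4 : ∫ x in (0:ℝ)..1, u t x * d4 t x = ∫ x in (0:ℝ)..1, d2 t x * d2 t x := by
    rw [ibp1, ibp2]; ring
  have E2 : ∫ x in (0:ℝ)..1, u t x * d2 t x = -∫ x in (0:ℝ)..1, d1 t x * d1 t x := by
    rw [ibp3]; ring
  -- compute the integral of F' t
  have hval : ∫ x in (0:ℝ)..1, F' t x
      = -(∫ x in (0:ℝ)..1,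
          (iteratedDeriv 2 (fun y => u t y) x) ^ 2 + (deriv (fun y => u t y) x) ^ 2) := by
    have hsplit : ∫ x in (0:ℝ)..1, F' t x
        = -((∫ x in (0:ℝ)..1, u t x * d4 t x) - ∫ x in (0:ℝ)..1, u t x * d2 t x) := by
      rw [← intervalIntegral.integral_sub (f := fun x => u t x * d4 t x) ((cf0.mul cf4).intervalIntegrable 0 1)
        (g := fun x => u t x * d2 t x) ((cf0.mul cf2).intervalIntegrable 0 1), ← intervalIntegral.integral_neg]
      congr 1
      funext x
      show -(u t x * (d4 t x - d2 t x)) = -(u t x * d4 t x - u t x * d2 t x)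
      ring
    rw [hsplit, E4, E2]
    have : ∫ x in (0:ℝ)..1,
        (iteratedDeriv 2 (fun y => u t y) x) ^ 2 + (deriv (fun y => u t y) x) ^ 2
        = (∫ x in (0:ℝ)..1, d2 t x * d2 t x) + ∫ x in (0:ℝ)..1, d1 t x * d1 t x := by
      rw [← intervalIntegral.integral_add (f := fun x => d2 t x * d2 t x) ((cf2.mul cf2).intervalIntegrable 0 1)
        (g := fun x => d1 t x * d1 t x) ((cf1.mul cf1).intervalIntegrable 0 1)]
      congr 1
      funext x
      rw [hit2]
      show d2 t x ^ 2 + d1 t x ^ 2 = d2 t x * d2 t x + d1 t x * d1 t x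
      ring
    rw [this]
    ring
  constructor
  · rw [← hval]
    exact hDeriv
  · have hnn : 0 ≤ ∫ x in (0:ℝ)..1,
        (iteratedDeriv 2 (fun y => u t y) x) ^ 2 + (deriv (fun y => u t y) x) ^ 2 :=
      intervalIntegral.integral_nonneg zero_le_one (fun x _ => by positivity)
    linarith
end

section
/- Let (u_n) be a sequence of measurable functions on [0,T] × 𝕋 converging almost everywhere to u, and suppose there is a constant C such that for all n and all δ ∈ (0,1), meas{(t,x) : u_n(t,x) < δ} ≤ C/(−ln δ). Then meas{(t,x) : u(t,x) = 0} = 0, i.e., u > 0 almost everywhere provided u ≥ 0 a.e. -/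
/-!
Fix `δ ∈ (0,1)`. Almost every zero of `u` is a point where eventually `u_n < δ`, and the sets
`{u_n < δ for all n ≥ N}` increase in `N` with measures bounded by the uniform bound on
`meas{u_n < δ}`; hence `meas{u = 0} ≤ C / (-ln δ)`, which tends to `0` as `δ → 0⁺`.
-/

open MeasureTheory Set Filter Topology

open scoped ENNReal

theorem measure_setOf_lt_le_of_tendsto_ae {α β : Type*} [MeasurableSpace α] {μ : Measure α}
    [TopologicalSpace β] [LinearOrder β] [OrderClosedTopology β]
    {f : ℕ → α → β} {g : α → β} (hfg : ∀ᵐ x ∂μ, Tendsto (fun n => f n x) atTop (𝓝 (g x)))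
    {δ : β} {B : ℝ≥0∞} (hB : ∀ n, μ {x | f n x < δ} ≤ B) :
    μ {x | g x < δ} ≤ B := by
  set A : ℕ → Set α := fun N => ⋂ n ≥ N, {x | f n x < δ}
  have hA : Monotone A := fun N M hNM x hx =>
    mem_iInter₂.2 fun n hn => mem_iInter₂.1 hx n (hNM.trans hn)
  have hsub : {x | g x < δ} ≤ᶠ[ae μ] ⋃ N, A N := by
    filter_upwards [hfg] with x hx hgx
    obtain ⟨N, hN⟩ := eventually_atTop.1 (hx.eventually_lt_const hgx)
    exact mem_iUnion.2 ⟨N, mem_iInter₂.2 hN⟩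
  calc μ {x | g x < δ} ≤ μ (⋃ N, A N) := measure_mono_ae hsub
    _ = ⨆ N, μ (A N) := hA.measure_iUnion
    _ ≤ B := iSup_le fun N => (measure_mono (biInter_subset_of_mem le_rfl)).trans (hB N)

theorem eq_zero_of_forall_le_ofReal_div_neg_log {a : ℝ≥0∞} {C : ℝ}
    (h : ∀ δ ∈ Ioo (0 : ℝ) 1, a ≤ ENNReal.ofReal (C / -Real.log δ)) : a = 0 := by
  have hlim : Tendsto (fun δ => ENNReal.ofReal (C / -Real.log δ)) (𝓝[>] 0) (𝓝 0) := by
    have := (tendsto_neg_atBot_atTop.comp Real.tendsto_log_nhdsGT_zero).const_div_atTop C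
    simpa using ENNReal.tendsto_ofReal this
  have hle : ∀ᶠ δ in 𝓝[>] (0 : ℝ), a ≤ ENNReal.ofReal (C / -Real.log δ) := by
    filter_upwards [Ioo_mem_nhdsGT (zero_lt_one' ℝ)] with δ hδ using h δ hδ
  exact nonpos_iff_eq_zero.1 (ge_of_tendsto hlim hle)

theorem stmt8_general (T C : ℝ)
    (un : ℕ → ℝ × ℝ → ℝ) (u : ℝ × ℝ → ℝ)
    (hconv : ∀ᵐ p ∂(volume.restrict (Icc (0:ℝ) T ×ˢ Icc (0:ℝ) 1)),
      Tendsto (fun n => un n p) atTop (nhds (u p)))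
    (hbd : ∀ n, ∀ δ ∈ Ioo (0:ℝ) 1,
      (volume ((Icc (0:ℝ) T ×ˢ Icc (0:ℝ) 1) ∩ {p | un n p < δ})).toReal ≤ C / (- Real.log δ)) :
    volume ((Icc (0:ℝ) T ×ˢ Icc (0:ℝ) 1) ∩ {p | u p = 0}) = 0 := by
  set S : Set (ℝ × ℝ) := Icc (0:ℝ) T ×ˢ Icc (0:ℝ) 1
  have hS : MeasurableSet S := measurableSet_Icc.prod measurableSet_Icc
  have hSfin : volume S ≠ ∞ := (isCompact_Icc.prod isCompact_Icc).measure_ne_top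
  have hrestrict (s : Set (ℝ × ℝ)) : volume.restrict S s = volume (S ∩ s) := by
    rw [Measure.restrict_apply' hS, inter_comm]
  rw [← hrestrict]
  refine eq_zero_of_forall_le_ofReal_div_neg_log (C := C) fun δ hδ => ?_
  refine (measure_mono fun p (hp : u p = 0) => (show u p < δ by rw [hp]; exact hδ.1)).trans ?_
  refine measure_setOf_lt_le_of_tendsto_ae hconv fun n => ?_
  rw [hrestrict, ← ENNReal.ofReal_toReal (measure_ne_top_of_subset inter_subset_left hSfin)]
  exact ENNReal.ofReal_le_ofReal (hbd n δ hδ)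

/-- If nonnegative measurable `u_n → u` a.e. on `[0,T] × 𝕋` and
`meas{u_n < δ} ≤ C/(-ln δ)` for all `n` and `δ ∈ (0,1)`, then `meas{u = 0} = 0`,
i.e. `u > 0` a.e. provided `u ≥ 0` a.e. -/
theorem stmt8 (T C : ℝ) (hT : 0 < T)
    (un : ℕ → ℝ × ℝ → ℝ) (u : ℝ × ℝ → ℝ)
    (hmeasn : ∀ n, Measurable (un n)) (hmeas : Measurable u)
    (hconv : ∀ᵐ p ∂(volume.restrict (Icc (0:ℝ) T ×ˢ Icc (0:ℝ) 1)),
      Tendsto (fun n => un n p) atTop (nhds (u p)))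
    (hbd : ∀ n, ∀ δ ∈ Ioo (0:ℝ) 1,
      (volume ((Icc (0:ℝ) T ×ˢ Icc (0:ℝ) 1) ∩ {p | un n p < δ})).toReal ≤ C / (- Real.log δ))
    (hnn : ∀ᵐ p ∂(volume.restrict (Icc (0:ℝ) T ×ˢ Icc (0:ℝ) 1)), 0 ≤ u p) :
    volume ((Icc (0:ℝ) T ×ˢ Icc (0:ℝ) 1) ∩ {p | u p = 0}) = 0 :=
  stmt8_general T C un u hconv hbd
end

section
/- Let ĥ ∈ L¹(ℝ^d, |ξ|² dξ) ∩ appropriate spaces and define ‖h‖_s = ∫_{ℝ^d} |ξ|^s |ĥ(ξ)| dξ. For any real s ≥ 1 and integer j ≥ 2, ∫_{ℝ^d} |ξ|^s |(|·|² ĥ)^{*j}(ξ)| dξ ≤ j^s ‖h‖_{s+2} ‖h‖_2^{j−1}, where ^{*j} denotes the j-fold convolution of the function ξ ↦ |ξ|² ĥ(ξ). -/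
/-!
Put `g = |·|² ĥ`, `k = |g|`, `A = ‖h‖_{s+2} = ∫ |ξ|^s k` and `B = ‖h‖_2 = ∫ k`. Since
`|g^{*n}| ≤ k^{*n}` pointwise, it suffices to bound convolution powers of the nonnegative
function `k`, for which `∫ k^{*n} = Bⁿ` by Fubini and translation invariance.

For the weighted integral, convexity of `t ↦ t^s` with the weights `n/(n+1)` and `1/(n+1)` gives
`|a + b|^s ≤ ((n+1)/n)^{s-1} |a|^s + (n+1)^{s-1} |b|^s`. Inserting this under the integral defining
`k^{*(n+1)} = k^{*n} ⋆ k` turns the bound `n^s A B^{n-1}` for `k^{*n}` into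
`((n+1)/n)^{s-1} n^s A Bⁿ + (n+1)^{s-1} A Bⁿ = (n+1)^s A Bⁿ`.
-/

open MeasureTheory

/-- `convIter g n` is the `(n+1)`-fold convolution `g * ⋯ * g` of `g` with itself. -/
noncomputable def convIter (d : ℕ) (g : EuclideanSpace ℝ (Fin d) → ℂ) :
    ℕ → EuclideanSpace ℝ (Fin d) → ℂ
  | 0 => g
  | n + 1 => MeasureTheory.convolution (convIter d g n) g
      (ContinuousLinearMap.mul ℂ ℂ) volume

open scoped ENNReal

theorem Real.add_rpow_le_of_one_le {s p q a b : ℝ} (hs : 1 ≤ s) (hp : 0 < p) (hq : 0 < q)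
    (ha : 0 ≤ a) (hb : 0 ≤ b) :
    (a + b) ^ s ≤ ((p + q) / p) ^ (s - 1) * a ^ s + ((p + q) / q) ^ (s - 1) * b ^ s := by
  have hpq : 0 < p + q := by positivity
  have hweight : ∀ r c : ℝ, 0 < r → 0 ≤ c →
      r / (p + q) * ((p + q) / r * c) ^ s = ((p + q) / r) ^ (s - 1) * c ^ s := fun r c hr hc => by
    rw [Real.mul_rpow (by positivity) hc, Real.rpow_sub_one (by positivity)]
    field_simp
  have hsum : p / (p + q) * ((p + q) / p * a) + q / (p + q) * ((p + q) / q * b) = a + b := by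
    field_simp
  have hconv := (convexOn_rpow hs).2 (Set.mem_Ici.2 (by positivity : 0 ≤ (p + q) / p * a))
    (Set.mem_Ici.2 (by positivity : 0 ≤ (p + q) / q * b)) (by positivity : 0 ≤ p / (p + q))
    (by positivity : 0 ≤ q / (p + q)) (by field_simp)
  simpa only [smul_eq_mul, hweight p a hp ha, hweight q b hq hb, hsum] using hconv

theorem ofReal_norm_add_rpow_le {E : Type*} [SeminormedAddGroup E] {s p q : ℝ} (hs : 1 ≤ s)
    (hp : 0 < p) (hq : 0 < q) (x y : E) :
    ENNReal.ofReal (‖x + y‖ ^ s) ≤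
      ENNReal.ofReal (((p + q) / p) ^ (s - 1)) * ENNReal.ofReal (‖x‖ ^ s) +
        ENNReal.ofReal (((p + q) / q) ^ (s - 1)) * ENNReal.ofReal (‖y‖ ^ s) := by
  rw [← ENNReal.ofReal_mul (by positivity), ← ENNReal.ofReal_mul (by positivity),
    ← ENNReal.ofReal_add (by positivity) (by positivity)]
  refine ENNReal.ofReal_le_ofReal ?_
  calc ‖x + y‖ ^ s ≤ (‖x‖ + ‖y‖) ^ s := by gcongr; exact norm_add_le x y
    _ ≤ _ := Real.add_rpow_le_of_one_le hs hp hq (norm_nonneg x) (norm_nonneg y)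

section LConvolution

variable {G : Type*} [AddCommGroup G] [MeasurableSpace G] [MeasurableAdd₂ G] [MeasurableNeg G]
  {μ : Measure G} {f g W k : G → ℝ≥0∞}

theorem weight_mul_lconvolution_le (hf : Measurable f) (hg : Measurable g) (hW : Measurable W)
    {c₁ c₂ : ℝ≥0∞} (hWadd : ∀ a b, W (a + b) ≤ c₁ * W a + c₂ * W b) (x : G) :
    W x * (f ⋆ₗ[μ] g) x ≤ c₁ * ((W * f) ⋆ₗ[μ] g) x + c₂ * (f ⋆ₗ[μ] (W * g)) x := by
  simp only [lconvolution_def, Pi.mul_apply]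
  rw [← lintegral_const_mul c₁ (by fun_prop), ← lintegral_const_mul c₂ (by fun_prop),
    ← lintegral_add_left (by fun_prop)]
  refine (lintegral_const_mul_le _ _).trans (lintegral_mono fun y => ?_)
  calc W x * (f y * g (-y + x)) = W (y + (-y + x)) * (f y * g (-y + x)) := by
        rw [add_neg_cancel_left]
    _ ≤ (c₁ * W y + c₂ * W (-y + x)) * (f y * g (-y + x)) := by gcongr; exact hWadd _ _
    _ = c₁ * (W y * f y * g (-y + x)) + c₂ * (f y * (W (-y + x) * g (-y + x))) := by ring

/-- `lconvolutionPow k μ n` is the `(n+1)`-fold convolution `k ⋆ₗ ⋯ ⋆ₗ k`. -/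
noncomputable def lconvolutionPow (k : G → ℝ≥0∞) (μ : Measure G) : ℕ → G → ℝ≥0∞
  | 0 => k
  | n + 1 => lconvolutionPow k μ n ⋆ₗ[μ] k

theorem measurable_lconvolutionPow [SFinite μ] (hk : Measurable k) (n : ℕ) :
    Measurable (lconvolutionPow k μ n) := by
  induction n with
  | zero => exact hk
  | succ n ih => exact measurable_lconvolution μ ih hk

variable [μ.IsAddLeftInvariant] [SFinite μ]

theorem lintegral_lconvolution (hf : Measurable f) (hg : Measurable g) :
    ∫⁻ x, (f ⋆ₗ[μ] g) x ∂μ = (∫⁻ x, f x ∂μ) * ∫⁻ x, g x ∂μ := by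
  simp only [lconvolution_def]
  rw [lintegral_lintegral_swap (by fun_prop), ← lintegral_mul_const _ hf]
  refine lintegral_congr fun y => ?_
  rw [lintegral_add_left_eq_self (fun x => f y * g x) (-y), lintegral_const_mul _ hg]

theorem lintegral_weight_mul_lconvolution_le (hf : Measurable f) (hg : Measurable g)
    (hW : Measurable W) {c₁ c₂ : ℝ≥0∞} (hWadd : ∀ a b, W (a + b) ≤ c₁ * W a + c₂ * W b) :
    ∫⁻ x, W x * (f ⋆ₗ[μ] g) x ∂μ ≤
      c₁ * ((∫⁻ x, W x * f x ∂μ) * ∫⁻ x, g x ∂μ) +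
        c₂ * ((∫⁻ x, f x ∂μ) * ∫⁻ x, W x * g x ∂μ) := by
  calc ∫⁻ x, W x * (f ⋆ₗ[μ] g) x ∂μ
      ≤ ∫⁻ x, c₁ * ((W * f) ⋆ₗ[μ] g) x + c₂ * (f ⋆ₗ[μ] (W * g)) x ∂μ :=
        lintegral_mono (weight_mul_lconvolution_le hf hg hW hWadd)
    _ = _ := by
        rw [lintegral_add_left (by fun_prop), lintegral_const_mul _ (by fun_prop),
          lintegral_const_mul _ (by fun_prop), lintegral_lconvolution (by fun_prop) hg,
          lintegral_lconvolution hf (by fun_prop)]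
        rfl

theorem lintegral_lconvolutionPow (hk : Measurable k) (n : ℕ) :
    ∫⁻ x, lconvolutionPow k μ n x ∂μ = (∫⁻ x, k x ∂μ) ^ (n + 1) := by
  induction n with
  | zero => simp [lconvolutionPow]
  | succ n ih =>
    rw [lconvolutionPow, lintegral_lconvolution (measurable_lconvolutionPow hk n) hk, ih,
      ← pow_succ]

end LConvolution

theorem lintegral_rpow_norm_mul_lconvolutionPow_le {G : Type*} [NormedAddCommGroup G]
    [MeasurableSpace G] [OpensMeasurableSpace G] [MeasurableAdd₂ G] [MeasurableNeg G]
    {μ : Measure G} [μ.IsAddLeftInvariant] [SFinite μ] {k : G → ℝ≥0∞} {s : ℝ} (hs : 1 ≤ s)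
    (hk : Measurable k) (n : ℕ) :
    ∫⁻ x, ENNReal.ofReal (‖x‖ ^ s) * lconvolutionPow k μ n x ∂μ ≤
      ENNReal.ofReal (((n : ℝ) + 1) ^ s) * (∫⁻ x, ENNReal.ofReal (‖x‖ ^ s) * k x ∂μ) *
        (∫⁻ x, k x ∂μ) ^ n := by
  set A := ∫⁻ x, ENNReal.ofReal (‖x‖ ^ s) * k x ∂μ
  set B := ∫⁻ x, k x ∂μ
  induction n with
  | zero => simp [lconvolutionPow, A]
  | succ n ih =>
    set m : ℝ := n + 1
    have hm : 0 < m := by positivity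
    have hconst : ((m + 1) / m) ^ (s - 1) * m ^ s + ((m + 1) / 1) ^ (s - 1) = (m + 1) ^ s := by
      rw [Real.div_rpow (by positivity) hm.le, Real.rpow_sub_one hm.ne', div_one,
        Real.rpow_sub_one (by positivity)]
      field_simp
    calc ∫⁻ x, ENNReal.ofReal (‖x‖ ^ s) * lconvolutionPow k μ (n + 1) x ∂μ
        ≤ ENNReal.ofReal (((m + 1) / m) ^ (s - 1)) *
              ((∫⁻ x, ENNReal.ofReal (‖x‖ ^ s) * lconvolutionPow k μ n x ∂μ) * B) +
            ENNReal.ofReal (((m + 1) / 1) ^ (s - 1)) *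
              ((∫⁻ x, lconvolutionPow k μ n x ∂μ) * A) :=
          lintegral_weight_mul_lconvolution_le (measurable_lconvolutionPow hk n) hk
            (by fun_prop) (ofReal_norm_add_rpow_le hs hm one_pos)
      _ ≤ ENNReal.ofReal (((m + 1) / m) ^ (s - 1)) * (ENNReal.ofReal (m ^ s) * A * B ^ n * B) +
            ENNReal.ofReal (((m + 1) / 1) ^ (s - 1)) * (B ^ (n + 1) * A) := by
          rw [lintegral_lconvolutionPow hk]
          gcongr
      _ = ENNReal.ofReal (((m + 1) / m) ^ (s - 1) * m ^ s + ((m + 1) / 1) ^ (s - 1)) *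
            A * B ^ (n + 1) := by
          rw [ENNReal.ofReal_add (by positivity) (by positivity),
            ENNReal.ofReal_mul (by positivity)]
          ring
      _ = ENNReal.ofReal ((((n + 1 : ℕ) : ℝ) + 1) ^ s) * A * B ^ (n + 1) := by
          rw [hconst]; push_cast; rfl

theorem enorm_convolution_mul_le {G 𝕜 : Type*} [AddCommGroup G] [MeasurableSpace G] [RCLike 𝕜]
    (f g : G → 𝕜) (μ : Measure G) (x : G) :
    ‖convolution f g (ContinuousLinearMap.mul 𝕜 𝕜) μ x‖ₑ ≤ ((‖f ·‖ₑ) ⋆ₗ[μ] (‖g ·‖ₑ)) x := by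
  simp only [convolution_def, lconvolution_def, ContinuousLinearMap.mul_apply', neg_add_eq_sub,
    ← enorm_mul]
  exact enorm_integral_le_lintegral_enorm _

theorem enorm_convIter_le_lconvolutionPow {d : ℕ} (g : EuclideanSpace ℝ (Fin d) → ℂ) (n : ℕ)
    (x : EuclideanSpace ℝ (Fin d)) :
    ‖convIter d g n x‖ₑ ≤ lconvolutionPow (‖g ·‖ₑ) volume n x := by
  induction n generalizing x with
  | zero => rfl
  | succ n ih =>
    refine (enorm_convolution_mul_le _ _ _ x).trans (lintegral_mono fun y => ?_)
    gcongr
    exact ih y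

theorem ofReal_integral_mul_norm_le_lintegral {α E : Type*} [MeasurableSpace α] {μ : Measure α}
    [NormedAddCommGroup E] {w : α → ℝ} (hw : ∀ x, 0 ≤ w x) (F : α → E) :
    ENNReal.ofReal (∫ x, w x * ‖F x‖ ∂μ) ≤ ∫⁻ x, ENNReal.ofReal (w x) * ‖F x‖ₑ ∂μ := by
  refine (Real.ofReal_le_enorm _).trans <| (enorm_integral_le_lintegral_enorm _).trans_eq <|
    lintegral_congr fun x => ?_
  rw [Real.enorm_eq_ofReal (mul_nonneg (hw x) (norm_nonneg _)), ENNReal.ofReal_mul (hw x),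
    ofReal_norm]

theorem stmt16_general (d : ℕ) (hh : EuclideanSpace ℝ (Fin d) → ℂ)
    (hmeas : Measurable hh) (s : ℝ) (hs : 1 ≤ s) (j : ℕ) (hj : 2 ≤ j)
    (hint2 : Integrable (fun ξ : EuclideanSpace ℝ (Fin d) => ‖ξ‖ ^ (2:ℝ) * ‖hh ξ‖))
    (hints2 : Integrable
      (fun ξ : EuclideanSpace ℝ (Fin d) => ‖ξ‖ ^ (s + 2) * ‖hh ξ‖)) :
    (∫ ξ : EuclideanSpace ℝ (Fin d),
        ‖ξ‖ ^ s * ‖convIter d (fun η => ((‖η‖ ^ (2:ℝ) : ℝ) : ℂ) * hh η) (j - 1) ξ‖)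
      ≤ (j : ℝ) ^ s
          * (∫ ξ : EuclideanSpace ℝ (Fin d), ‖ξ‖ ^ (s + 2) * ‖hh ξ‖)
          * (∫ ξ : EuclideanSpace ℝ (Fin d), ‖ξ‖ ^ (2:ℝ) * ‖hh ξ‖) ^ (j - 1) := by
  set g : EuclideanSpace ℝ (Fin d) → ℂ := fun η => ((‖η‖ ^ (2:ℝ) : ℝ) : ℂ) * hh η
  have hg_enorm : ∀ ξ, ‖g ξ‖ₑ = ENNReal.ofReal (‖ξ‖ ^ (2:ℝ) * ‖hh ξ‖) := fun ξ => by
    rw [← ofReal_norm, norm_mul, Complex.norm_real, Real.norm_of_nonneg (by positivity)]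
  have hB : ∫⁻ ξ, ‖g ξ‖ₑ = ENNReal.ofReal (∫ ξ, ‖ξ‖ ^ (2:ℝ) * ‖hh ξ‖) := by
    simp_rw [hg_enorm]
    exact (ofReal_integral_eq_lintegral_ofReal hint2 (ae_of_all _ fun ξ => by positivity)).symm
  have hA : ∫⁻ ξ, ENNReal.ofReal (‖ξ‖ ^ s) * ‖g ξ‖ₑ =
      ENNReal.ofReal (∫ ξ, ‖ξ‖ ^ (s + 2) * ‖hh ξ‖) := by
    have hpoint : ∀ ξ : EuclideanSpace ℝ (Fin d),
        ENNReal.ofReal (‖ξ‖ ^ s) * ‖g ξ‖ₑ = ENNReal.ofReal (‖ξ‖ ^ (s + 2) * ‖hh ξ‖) := fun ξ => by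
      rw [hg_enorm, ← ENNReal.ofReal_mul (by positivity), ← mul_assoc,
        ← Real.rpow_add' (norm_nonneg ξ) (by linarith)]
    simp_rw [hpoint]
    exact (ofReal_integral_eq_lintegral_ofReal hints2 (ae_of_all _ fun ξ => by positivity)).symm
  have hj' : ((j - 1 : ℕ) : ℝ) + 1 = j := by
    rw [Nat.cast_sub (by omega)]; ring
  rw [← ENNReal.ofReal_le_ofReal_iff (by positivity)]
  calc ENNReal.ofReal (∫ ξ, ‖ξ‖ ^ s * ‖convIter d g (j - 1) ξ‖)
      ≤ ∫⁻ ξ, ENNReal.ofReal (‖ξ‖ ^ s) * ‖convIter d g (j - 1) ξ‖ₑ :=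
        ofReal_integral_mul_norm_le_lintegral (fun ξ => by positivity) _
    _ ≤ ∫⁻ ξ, ENNReal.ofReal (‖ξ‖ ^ s) * lconvolutionPow (‖g ·‖ₑ) volume (j - 1) ξ := by
        gcongr with ξ
        exact enorm_convIter_le_lconvolutionPow g (j - 1) ξ
    _ ≤ _ := lintegral_rpow_norm_mul_lconvolutionPow_le hs (by fun_prop) (j - 1)
    _ = _ := by
        rw [hA, hB, hj', ← ENNReal.ofReal_pow (by positivity),
          ← ENNReal.ofReal_mul (by positivity), ← ENNReal.ofReal_mul (by positivity)]

/-- for `s ≥ 1` and `j ≥ 2`,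
`∫ |ξ|^s |(|·|² ĥ)^{*j}(ξ)| dξ ≤ j^s ‖h‖_{s+2} ‖h‖_2^{j-1}`,
where `‖h‖_σ = ∫ |ξ|^σ |ĥ(ξ)| dξ`. -/
theorem stmt16 (d : ℕ) (hd : 1 ≤ d) (hh : EuclideanSpace ℝ (Fin d) → ℂ)
    (hmeas : Measurable hh) (s : ℝ) (hs : 1 ≤ s) (j : ℕ) (hj : 2 ≤ j)
    (hint2 : Integrable (fun ξ : EuclideanSpace ℝ (Fin d) => ‖ξ‖ ^ (2:ℝ) * ‖hh ξ‖))
    (hints2 : Integrable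
      (fun ξ : EuclideanSpace ℝ (Fin d) => ‖ξ‖ ^ (s + 2) * ‖hh ξ‖)) :
    (∫ ξ : EuclideanSpace ℝ (Fin d),
        ‖ξ‖ ^ s * ‖convIter d (fun η => ((‖η‖ ^ (2:ℝ) : ℝ) : ℂ) * hh η) (j - 1) ξ‖)
      ≤ (j : ℝ) ^ s
          * (∫ ξ : EuclideanSpace ℝ (Fin d), ‖ξ‖ ^ (s + 2) * ‖hh ξ‖)
          * (∫ ξ : EuclideanSpace ℝ (Fin d), ‖ξ‖ ^ (2:ℝ) * ‖hh ξ‖) ^ (j - 1) :=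
  stmt16_general d hh hmeas s hs j hj hint2 hints2
end
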